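/- Let d ≥ 1, let X and X' be aperiodic minimal subshifts over nonempty finite alphabets, and let h : SX → SX' be a homeomorphism between their suspensions. Then there exists a unique map c : SX × ℝ^d → ℝ^d such that h(x +ᵥ T) = c(T, x) +ᵥ h(T) for all T ∈ SX and x ∈ ℝ^d. Moreover c is continuous jointly in the two variables; for each fixed T ∈ SX the map x ↦ c(T, x) is a homeomorphism of ℝ^d onto itself; and its inverse is x ↦ c'(h(T), x), where c' is the corresponding map for the homeomorphism h⁻¹ : SX' → SX. -/

import Mathlib

open Filter Topology

abbrev Zd (d : ℕ) := Fin d → ℤ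
abbrev Rd (d : ℕ) := EuclideanSpace ℝ (Fin d)

def toRd {d : ℕ} (n : Zd d) : Rd d := WithLp.toLp 2 (fun i => (n i : ℝ))

def shift {d : ℕ} {A : Type*} (n : Zd d) (ω : Zd d → A) : Zd d → A := fun k => ω (k - n)

structure IsSubshift {d : ℕ} {A : Type*} [TopologicalSpace A] (X : Set (Zd d → A)) : Prop where
  nonempty : X.Nonempty
  closed : IsClosed X
  shift_mem : ∀ n : Zd d, ∀ ω ∈ X, shift n ω ∈ X

def IsMinimal {d : ℕ} {A : Type*} [TopologicalSpace A] (X : Set (Zd d → A)) : Prop :=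
  ∀ ω ∈ X, X ⊆ closure {ω' | ∃ n : Zd d, ω' = shift n ω}

def IsAperiodic {d : ℕ} {A : Type*} (X : Set (Zd d → A)) : Prop :=
  ∀ ω ∈ X, ∀ n : Zd d, shift n ω = ω → n = 0

def suspRel {d : ℕ} {A : Type*} [TopologicalSpace A] (X : Set (Zd d → A)) :
    X × Rd d → X × Rd d → Prop :=
  fun p q => ∃ n : Zd d, (q.1 : Zd d → A) = shift n (p.1 : Zd d → A) ∧ q.2 = p.2 - toRd n

abbrev Susp {d : ℕ} {A : Type*} [TopologicalSpace A] (X : Set (Zd d → A)) :=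
  Quot (suspRel X)

instance {d : ℕ} {A : Type*} [TopologicalSpace A] (X : Set (Zd d → A)) :
    VAdd (Rd d) (Susp X) where
  vadd t := Quot.lift (fun p => Quot.mk (suspRel X) (p.1, p.2 + t))
    (fun p q hpq => by
      obtain ⟨n, h1, h2⟩ := hpq
      exact Quot.sound ⟨n, h1, by rw [h2, sub_add_eq_add_sub]⟩)

def iota {d : ℕ} {A : Type*} [TopologicalSpace A] (X : Set (Zd d → A)) : X → Susp X :=
  fun ω => Quot.mk _ (ω, 0)

def box (d : ℕ) (n : ℕ) : Set (Zd d) := {k | ∀ i, |k i| ≤ (n : ℤ)}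

noncomputable def complexity {d : ℕ} {A : Type*} (X : Set (Zd d → A)) (n : ℕ) : ℕ :=
  Set.ncard ((fun ω => (fun k : box d n => ω k.1)) '' X)

noncomputable def repetitivity {d : ℕ} {A : Type*} (X : Set (Zd d → A)) (n : ℕ) : ℝ :=
  sInf {C : ℝ | 0 ≤ C ∧ ∀ ω ∈ X, ∀ ω₀ ∈ X, ∃ k : Zd d,
    ‖toRd k‖ ≤ C ∧ ∀ j ∈ box d n, shift k ω j = ω₀ j}

def IsCocycleFor {d : ℕ} {A A' : Type*} [TopologicalSpace A] [TopologicalSpace A']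
    {X : Set (Zd d → A)} {X' : Set (Zd d → A')}
    (h : Susp X ≃ₜ Susp X') (c : Susp X × Rd d → Rd d) : Prop :=
  ∀ (T : Susp X) (x : Rd d), h (x +ᵥ T) = c (T, x) +ᵥ h T


/-!
The projection `X × ℝ^d → SX` is a covering map whose deck group `ℤ^d` acts freely through the
`ℝ^d` coordinate. Near a point `(T₀, x₀)`, lift the homotopy `t ↦ h (t • x +ᵥ T)` to
`X' × ℝ^d`, starting from a local section through `h T₀`; since `X'` is totally disconnected,
the lifted paths keep their `X'`-coordinate, so `h (x +ᵥ T)` is `h T` translated by the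
displacement of the lift, which depends continuously on `(T, x)`. Aperiodicity makes `ℝ^d` act
freely on the suspensions, so this displacement is the only possible value of `c (T, x)`;
comparing `c` with the cocycle `c'` of `h⁻¹` then shows that `c (T, ·)` and `c' (h T, ·)` are
mutually inverse.
-/

open unitInterval

section Shift

variable {d : ℕ}

@[simp] lemma toRd_zero : toRd (0 : Zd d) = 0 := by
  ext i; simp [toRd]

lemma toRd_add (m n : Zd d) : toRd (m + n) = toRd m + toRd n := by
  ext i; simp [toRd]

lemma eq_zero_of_norm_toRd_lt_one {n : Zd d} (hn : ‖toRd n‖ < 1) : n = 0 := by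
  funext i
  have hi : |(n i : ℝ)| < 1 := (PiLp.norm_apply_le (toRd n) i).trans_lt hn
  exact Int.abs_lt_one_iff.mp (by exact_mod_cast hi)

variable {A : Type*}

@[simp] lemma shift_zero (ω : Zd d → A) : shift 0 ω = ω := by
  funext k; simp [shift]

lemma shift_add (m n : Zd d) (ω : Zd d → A) : shift (m + n) ω = shift m (shift n ω) := by
  funext k; simp [shift, sub_sub]

lemma continuous_shift [TopologicalSpace A] (n : Zd d) :
    Continuous (shift n : (Zd d → A) → Zd d → A) :=
  continuous_pi fun k => continuous_apply (k - n)

end Shift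

section Suspension

variable {d : ℕ} {A : Type*} [TopologicalSpace A] {X : Set (Zd d → A)}

lemma vadd_mk (t : Rd d) (q : X × Rd d) :
    t +ᵥ Quot.mk (suspRel X) q = Quot.mk (suspRel X) (q.1, q.2 + t) := rfl

instance : AddAction (Rd d) (Susp X) where
  zero_vadd T := by
    induction T using Quot.ind
    rw [vadd_mk, add_zero]
  add_vadd s t T := by
    induction T using Quot.ind
    simp only [vadd_mk, add_assoc, add_comm s]

instance : ContinuousVAdd (Rd d) (Susp X) where
  continuous_vadd := isQuotientMap_quot_mk.continuous_lift_prod_right <|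
    continuous_quot_mk.comp <| continuous_fst.comp continuous_snd |>.prodMk <|
      (continuous_snd.comp continuous_snd).add continuous_fst

lemma suspRel_equivalence : Equivalence (suspRel X) where
  refl q := ⟨0, (shift_zero _).symm, by simp⟩
  symm := fun ⟨n, h1, h2⟩ => ⟨-n, by rw [h1, ← shift_add, neg_add_cancel, shift_zero],
    by rw [h2, sub_sub, ← toRd_add, add_neg_cancel, toRd_zero, sub_zero]⟩
  trans := fun ⟨n, h1, h2⟩ ⟨m, h3, h4⟩ => ⟨m + n, by rw [h3, h1, shift_add],
    by rw [h4, h2, sub_sub, toRd_add, add_comm]⟩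

lemma mk_eq_mk_iff {a b : X × Rd d} :
    Quot.mk (suspRel X) a = Quot.mk (suspRel X) b ↔ suspRel X a b :=
  Quot.eq.trans suspRel_equivalence.eqvGen_iff

lemma IsAperiodic.vadd_left_injective (hX : IsAperiodic X) (T : Susp X) :
    Function.Injective fun t : Rd d => t +ᵥ T := by
  induction T using Quot.ind with
  | mk q =>
    intro s t hst
    obtain ⟨n, h1, h2⟩ := mk_eq_mk_iff.mp hst
    obtain rfl := hX q.1 q.1.2 n h1.symm
    simpa using h2.symm

@[reducible] def deckAction (hX : ∀ n : Zd d, ∀ ω ∈ X, shift n ω ∈ X) :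
    AddAction (Zd d) (X × Rd d) where
  vadd n q := (⟨shift n q.1, hX n q.1 q.1.2⟩, q.2 - toRd n)
  zero_vadd q := Prod.ext (Subtype.ext (shift_zero _)) <| by
    change q.2 - toRd 0 = q.2
    rw [toRd_zero, sub_zero]
  add_vadd m n q := Prod.ext (Subtype.ext (shift_add m n _)) <| by
    change q.2 - toRd (m + n) = q.2 - toRd n - toRd m
    rw [toRd_add]; abel

theorem isCoveringMap_suspMk (hX : ∀ n : Zd d, ∀ ω ∈ X, shift n ω ∈ X) :
    IsCoveringMap (Quot.mk (suspRel X)) := by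
  let := deckAction hX
  refine IsAddQuotientCoveringMap.isCoveringMap _ (Zd d)
    { toIsQuotientMap := isQuotientMap_quot_mk
      continuous_const_vadd := fun n => ?_
      apply_eq_iff_mem_orbit := fun {a b} => ?_
      disjoint := fun q => ?_ }
  · exact ((continuous_shift n).comp (continuous_subtype_val.comp continuous_fst)).subtype_mk _
      |>.prodMk (continuous_snd.sub continuous_const)
  · rw [mk_eq_mk_iff, AddAction.mem_orbit_symm]
    exact ⟨fun ⟨n, h1, h2⟩ => ⟨n, Prod.ext (Subtype.ext h1.symm) h2.symm⟩,
      fun ⟨n, hn⟩ => ⟨n, congrArg (·.1.1) hn.symm, congrArg (·.2) hn.symm⟩⟩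
  · refine ⟨Set.univ ×ˢ Metric.ball q.2 (1 / 2),
      prod_mem_nhds Filter.univ_mem (Metric.ball_mem_nhds _ (by norm_num)), ?_⟩
    rintro n ⟨_, ⟨a, ⟨-, ha⟩, rfl⟩, -, hna⟩
    refine eq_zero_of_norm_toRd_lt_one ?_
    calc ‖toRd n‖ = dist a.2 (a.2 - toRd n) := by rw [dist_eq_norm, sub_sub_cancel]
      _ ≤ dist a.2 q.2 + dist (a.2 - toRd n) q.2 := dist_triangle_right _ _ _
      _ < 1 / 2 + 1 / 2 := add_lt_add ha hna
      _ = 1 := by norm_num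

lemma mk_one_eq_vadd_mk_zero [TotallyDisconnectedSpace A] (γ : C(I, X × Rd d)) :
    Quot.mk (suspRel X) (γ 1) = ((γ 1).2 - (γ 0).2) +ᵥ Quot.mk (suspRel X) (γ 0) := by
  have hfst : (γ 1).1 = (γ 0).1 :=
    (isPreconnected_range (continuous_fst.comp γ.continuous)).subsingleton ⟨1, rfl⟩ ⟨0, rfl⟩
  rw [vadd_mk, ← hfst, add_sub_cancel]

theorem exists_continuousMap_vadd_eq [TotallyDisconnectedSpace A]
    (hX : ∀ n : Zd d, ∀ ω ∈ X, shift n ω ∈ X) {Y : Type*} [TopologicalSpace Y]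
    {K : Y × Rd d → Susp X} (hK : Continuous K) (y₀ : Y × Rd d) :
    ∃ N : Set (Y × Rd d), IsOpen N ∧ y₀ ∈ N ∧
      ∃ w : C(N, Rd d), ∀ q : N, K q = w q +ᵥ K (q.1.1, 0) := by
  have hcov := isCoveringMap_suspMk hX
  obtain ⟨e₀, he₀⟩ := Quot.exists_rep (K (y₀.1, 0))
  obtain ⟨φ, he₀φ, hφ⟩ := hcov.isLocalHomeomorph e₀
  have hK₀ : Continuous fun q : Y × Rd d => K (q.1, 0) :=
    hK.comp (continuous_fst.prodMk continuous_const)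
  set N := (fun q : Y × Rd d => K (q.1, 0)) ⁻¹' φ.target
  have hy₀ : y₀ ∈ N := by
    show K (y₀.1, 0) ∈ φ.target
    rw [← he₀, hφ]; exact φ.map_source he₀φ
  -- over `N` the base points `K (q.1, 0)` lift continuously through a local inverse of the covering
  let f : C(N, X × Rd d) := ⟨fun a => φ.symm (K (a.1.1, 0)),
    φ.continuousOn_symm.comp_continuous (hK₀.comp continuous_subtype_val) fun a => a.2⟩
  have hf : ∀ a, Quot.mk (suspRel X) (f a) = K (a.1.1, 0) := fun a => by
    rw [hφ]; exact φ.right_inv a.2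
  let H : C(I × N, Susp X) := ⟨fun ta => K (ta.2.1.1, (ta.1 : ℝ) • ta.2.1.2), by fun_prop⟩
  have hH₀ : ∀ a, H (0, a) = Quot.mk (suspRel X) (f a) := fun a => by simp [H, hf]
  let L := hcov.liftHomotopy H f hH₀
  let Γ : N → C(I, X × Rd d) := fun a => L.comp ((ContinuousMap.id I).prodMk (.const I a))
  have hΓ₀ : ∀ a, Γ a 0 = f a := hcov.liftHomotopy_zero H f hH₀
  have hΓ₁ : ∀ a : N, Quot.mk (suspRel X) (Γ a 1) = K a :=
    fun a => (congr_fun (hcov.liftHomotopy_lifts H f hH₀) (1, a)).trans (by simp [H])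
  refine ⟨N, φ.open_target.preimage hK₀, hy₀, ⟨fun a => (L (1, a)).2 - (f a).2, ?_⟩, fun a => ?_⟩
  · exact (continuous_snd.comp (L.continuous.comp (continuous_const.prodMk continuous_id))).sub
      (continuous_snd.comp f.continuous)
  · rw [← hΓ₁, mk_one_eq_vadd_mk_zero, hΓ₀, hf]
    rfl

lemma exists_continuousMap_map_vadd_eq [TotallyDisconnectedSpace A]
    (hX : ∀ n : Zd d, ∀ ω ∈ X, shift n ω ∈ X) {Z : Type*} [TopologicalSpace Z]
    [AddAction (Rd d) Z] [ContinuousVAdd (Rd d) Z] {F : Z → Susp X} (hF : Continuous F)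
    (q₀ : Z × Rd d) :
    ∃ N : Set (Z × Rd d), IsOpen N ∧ q₀ ∈ N ∧
      ∃ w : C(N, Rd d), ∀ q : N, F (q.1.2 +ᵥ q.1.1) = w q +ᵥ F q.1.1 := by
  obtain ⟨N, hN, hq₀, w, hw⟩ :=
    exists_continuousMap_vadd_eq hX (hF.comp (continuous_snd.vadd continuous_fst)) q₀
  exact ⟨N, hN, hq₀, w, fun q => by simpa using hw q⟩

end Suspension

section Cocycle

variable {d : ℕ} {A A' : Type*} [TopologicalSpace A] [TopologicalSpace A']
  {X : Set (Zd d → A)} {X' : Set (Zd d → A')} {h : Susp X ≃ₜ Susp X'}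
  {c : Susp X × Rd d → Rd d} {c' : Susp X' × Rd d → Rd d}

lemma exists_isCocycleFor [TotallyDisconnectedSpace A']
    (hX' : ∀ n : Zd d, ∀ ω ∈ X', shift n ω ∈ X') (h : Susp X ≃ₜ Susp X') :
    ∃ c, IsCocycleFor h c := by
  have hex : ∀ q : Susp X × Rd d, ∃ z : Rd d, h (q.2 +ᵥ q.1) = z +ᵥ h q.1 := fun q => by
    obtain ⟨N, -, hq, w, hw⟩ := exists_continuousMap_map_vadd_eq hX' h.continuous q
    exact ⟨w ⟨q, hq⟩, hw ⟨q, hq⟩⟩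
  choose c hc using hex
  exact ⟨c, fun T x => hc (T, x)⟩

lemma IsCocycleFor.eq (hX' : IsAperiodic X') (hc : IsCocycleFor h c) {c₂ : Susp X × Rd d → Rd d}
    (hc₂ : IsCocycleFor h c₂) : c = c₂ :=
  funext fun q => hX'.vadd_left_injective (h q.1) <| (hc q.1 q.2).symm.trans (hc₂ q.1 q.2)

lemma IsCocycleFor.continuous [TotallyDisconnectedSpace A']
    (hX' : ∀ n : Zd d, ∀ ω ∈ X', shift n ω ∈ X') (hX'ap : IsAperiodic X')
    (hc : IsCocycleFor h c) : Continuous c := by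
  refine continuous_iff_continuousAt.mpr fun q₀ => ?_
  obtain ⟨N, hN, hq₀, w, hw⟩ := exists_continuousMap_map_vadd_eq hX' h.continuous q₀
  have hcw : N.domRestrict c = w := funext fun q =>
    hX'ap.vadd_left_injective (h q.1.1) <| (hc q.1.1 q.1.2).symm.trans (hw q)
  exact (continuousOn_iff_continuous_domRestrict.mpr (hcw ▸ w.continuous)).continuousAt
    (hN.mem_nhds hq₀)

lemma IsCocycleFor.symm_apply_apply (hX : IsAperiodic X) (hc : IsCocycleFor h c)
    (hc' : IsCocycleFor h.symm c') (T : Susp X) (x : Rd d) : c' (h T, c (T, x)) = x := by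
  refine (hX.vadd_left_injective T ?_).symm
  simpa [← hc T x] using hc' (h T) (c (T, x))

lemma IsCocycleFor.apply_symm_apply (hX' : IsAperiodic X') (hc : IsCocycleFor h c)
    (hc' : IsCocycleFor h.symm c') (T : Susp X) (x : Rd d) : c (T, c' (h T, x)) = x := by
  refine (hX'.vadd_left_injective (h T) ?_).symm
  have hc'T := hc' (h T) x
  rw [h.symm_apply_apply] at hc'T
  simpa [← hc'T] using hc T (c' (h T, x))

end Cocycle

theorem cocycle_exists_unique_and_homeo_general
    {d : ℕ}
    {A A' : Type*} [TopologicalSpace A] [DiscreteTopology A]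
    [TopologicalSpace A'] [DiscreteTopology A']
    (X : Set (Zd d → A)) (X' : Set (Zd d → A'))
    (hX : IsSubshift X) (hX' : IsSubshift X')
    (hXap : IsAperiodic X) (hX'ap : IsAperiodic X')
    (h : Susp X ≃ₜ Susp X') :
    (∃! c : Susp X × Rd d → Rd d, IsCocycleFor h c) ∧
    (∀ (c : Susp X × Rd d → Rd d) (c' : Susp X' × Rd d → Rd d),
      IsCocycleFor h c → IsCocycleFor h.symm c' →
      Continuous c ∧
      ∀ T : Susp X, ∃ e : Rd d ≃ₜ Rd d,
        (∀ x : Rd d, e x = c (T, x)) ∧ (∀ x : Rd d, e.symm x = c' (h T, x))) := by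
  obtain ⟨c₀, hc₀⟩ := exists_isCocycleFor hX'.shift_mem h
  refine ⟨⟨c₀, hc₀, fun c hc => hc.eq hX'ap hc₀⟩, fun c c' hc hc' => ?_⟩
  have hcont := hc.continuous hX'.shift_mem hX'ap
  have hcont' := hc'.continuous hX.shift_mem hXap
  refine ⟨hcont, fun T => ⟨
    { toFun x := c (T, x)
      invFun x := c' (h T, x)
      left_inv := hc.symm_apply_apply hXap hc' T
      right_inv := hc.apply_symm_apply hX'ap hc' T
      continuous_toFun := hcont.comp (continuous_const.prodMk continuous_id)
      continuous_invFun := hcont'.comp (continuous_const.prodMk continuous_id) },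
    fun _ => rfl, fun _ => rfl⟩⟩

theorem cocycle_exists_unique_and_homeo
    {d : ℕ} (hd : 1 ≤ d)
    {A A' : Type*} [Fintype A] [Nonempty A] [TopologicalSpace A] [DiscreteTopology A]
    [Fintype A'] [Nonempty A'] [TopologicalSpace A'] [DiscreteTopology A']
    (X : Set (Zd d → A)) (X' : Set (Zd d → A'))
    (hX : IsSubshift X) (hX' : IsSubshift X')
    (hXmin : IsMinimal X) (hX'min : IsMinimal X')
    (hXap : IsAperiodic X) (hX'ap : IsAperiodic X')
    (h : Susp X ≃ₜ Susp X') :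
    (∃! c : Susp X × Rd d → Rd d, IsCocycleFor h c) ∧
    (∀ (c : Susp X × Rd d → Rd d) (c' : Susp X' × Rd d → Rd d),
      IsCocycleFor h c → IsCocycleFor h.symm c' →
      Continuous c ∧
      ∀ T : Susp X, ∃ e : Rd d ≃ₜ Rd d,
        (∀ x : Rd d, e x = c (T, x)) ∧ (∀ x : Rd d, e.symm x = c' (h T, x))) :=
  cocycle_exists_unique_and_homeo_general X X' hX hX' hXap hX'ap h
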